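/- Let d ≥ 1, let H be a d×d real symmetric positive-definite matrix, let L > 0 satisfy ⟨v, Hv⟩ ≤ L‖v‖² for all v ∈ ℝ^d, let q ∈ ℝ^d, f(θ) = ½⟨θ, Hθ⟩ − ⟨q, θ⟩, and θ* = H⁻¹q its unique minimizer. Let α, β ∈ ℝ with 0 ≤ α ≤ 1/L, 0 ≤ β ≤ 2/L − α, and α + β > 0, and let (θ_n)_{n≥0} be defined by θ_1 = θ_0 and, with η_n = n(θ_n − θ*), by η_{n+1} = (I − αH)η_n + (I − βH)(η_n − η_{n−1}) for n ≥ 1. Then for all n ≥ 1: f(θ_n) − f(θ*) ≤ 8‖H^{−1/2}(θ_0 − θ*)‖²/((α+β)² n²), where H^{−1/2} is the inverse of the positive-definite square root of H. -/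

import Mathlib

open Matrix

/-- The square root of a positive semidefinite matrix, as `Matrix.PosSemidef.sqrt` was defined in
Mathlib of December 2024 (removed since). -/
noncomputable def Matrix.PosSemidef.sqrt {n : Type*} [Fintype n] [DecidableEq n]
    {A : Matrix n n ℝ} (hA : A.PosSemidef) : Matrix n n ℝ :=
  hA.isHermitian.eigenvectorUnitary.1 * diagonal ((√·) ∘ hA.isHermitian.eigenvalues) *
    (star hA.isHermitian.eigenvectorUnitary : Matrix n n ℝ)

/-!
In an eigenbasis of `H`, a coordinate of `η_n` along an eigenvalue `λ` obeys the scalar recurrence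
`u_{n+2} = (2 - s) u_{n+1} - (1 - m) u_n` with `s = (α + β) λ ≤ 2`, `m = β λ`, `u_0 = 0`, so
`u_n = u_1 (x^n - y^n) / (x - y)` for the roots `x, y` of `z² - (2 - s) z + (1 - m)`.
Either both roots have modulus at most `ρ = 1 - s/4`, and then, expanding the quotient,
`|u_n| ≤ |u_1| ∑_{k<n} ρ^k ≤ (4/s) |u_1|`; or they are far apart
(`s · max(|x|, |y|) ≤ 2 |x - y|`), and then `|x^n - y^n| / |x - y| ≤ 4/s` directly.
Hence `λ u_n² ≤ 16 / (α + β)² · u_1² / λ`; summing over eigendirections gives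
`⟨η_n, H η_n⟩ ≤ 16 / (α + β)² · ⟨η_1, H⁻¹ η_1⟩`, and `η_1 = θ_0 - θ*`.
-/

open Finset

section GeomSum

variable {R : Type*} [CommRing R]

def geomSum₂ (x y : R) (n : ℕ) : R := ∑ i ∈ range n, x ^ i * y ^ (n - 1 - i)

@[simp] lemma geomSum₂_zero (x y : R) : geomSum₂ x y 0 = 0 := by simp [geomSum₂]

lemma geomSum₂_succ (x y : R) (n : ℕ) : geomSum₂ x y (n + 1) = x ^ n + y * geomSum₂ x y n := by
  simpa [geomSum₂] using geom_sum₂_succ_eq x y (n := n)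

lemma geomSum₂_add_two (x y : R) (n : ℕ) :
    geomSum₂ x y (n + 2) = (x + y) * geomSum₂ x y (n + 1) - x * y * geomSum₂ x y n := by
  rw [geomSum₂_succ x y (n + 1), geomSum₂_succ x y n]
  ring

lemma eq_mul_geomSum₂_of_rec {x y : R} {u : ℕ → R} (h0 : u 0 = 0)
    (hrec : ∀ n, u (n + 2) = (x + y) * u (n + 1) - x * y * u n) (n : ℕ) :
    u n = u 1 * geomSum₂ x y n := by
  induction n using Nat.twoStepInduction with
  | zero => simp [h0]
  | one => simp [geomSum₂]
  | more n ih₀ ih₁ => rw [hrec, ih₀, ih₁, geomSum₂_add_two]; ring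

variable {𝕜 : Type*} [NormedField 𝕜]

lemma norm_geomSum₂_le_inv {x y : 𝕜} {r : ℝ} (hr : 0 < r) (hx : ‖x‖ ≤ 1 - r)
    (hy : ‖y‖ ≤ 1 - r) (n : ℕ) : ‖geomSum₂ x y n‖ ≤ r⁻¹ := by
  have hy1 : ‖y‖ ≤ 1 := by linarith
  calc ‖geomSum₂ x y n‖ ≤ ∑ i ∈ range n, ‖x‖ ^ i * ‖y‖ ^ (n - 1 - i) := by
        simpa only [geomSum₂, norm_mul, norm_pow] using
          norm_sum_le (range n) fun i => x ^ i * y ^ (n - 1 - i)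
    _ ≤ ∑ i ∈ range n, (1 - r) ^ i := by
        gcongr with i
        calc ‖x‖ ^ i * ‖y‖ ^ (n - 1 - i) ≤ ‖x‖ ^ i * 1 := by
              gcongr; exact pow_le_one₀ (norm_nonneg y) hy1
          _ ≤ (1 - r) ^ i := by rw [mul_one]; gcongr
    _ ≤ (1 - r) ^ 0 / (1 - (1 - r)) := by
        rw [range_eq_Ico]
        exact geom_sum_Ico_le_of_lt_one ((norm_nonneg x).trans hx) (by linarith)
    _ = r⁻¹ := by simp

lemma norm_geomSum₂_le_of_ne {x y : 𝕜} (hxy : x ≠ y) {ρ : ℝ} (hρ : ρ ≤ 1) (hx : ‖x‖ ≤ ρ)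
    (hy : ‖y‖ ≤ ρ) (n : ℕ) : ‖geomSum₂ x y n‖ ≤ 2 * ρ / ‖x - y‖ := by
  have hρ0 : 0 ≤ ρ := (norm_nonneg x).trans hx
  rcases Nat.eq_zero_or_pos n with rfl | hn
  · simp only [geomSum₂_zero, norm_zero]; positivity
  have hpow : ∀ z : 𝕜, ‖z‖ ≤ ρ → ‖z‖ ^ n ≤ ρ := fun z hz =>
    (pow_le_of_le_one (norm_nonneg z) (hz.trans hρ) hn.ne').trans hz
  have hsub : 0 < ‖x - y‖ := norm_pos_iff.mpr (sub_ne_zero.mpr hxy)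
  rw [le_div_iff₀ hsub, ← norm_mul, geomSum₂, geom_sum₂_mul]
  calc ‖x ^ n - y ^ n‖ ≤ ‖x‖ ^ n + ‖y‖ ^ n := by
        simpa only [norm_pow] using norm_sub_le (x ^ n) (y ^ n)
    _ ≤ 2 * ρ := by linarith [hpow x hx, hpow y hy]

lemma abs_geomSum₂_real_roots_le {s r : ℝ} (hs0 : 0 < s) (hs2 : s ≤ 2) (hr0 : 0 ≤ r) (hrs : r ≤ s)
    (n : ℕ) : |geomSum₂ ((2 - s + r) / 2) ((2 - s - r) / 2) n| ≤ 4 / s := by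
  rw [← Real.norm_eq_abs]
  by_cases hsep : s / 2 ≤ r
  · have hsub : (2 - s + r) / 2 - (2 - s - r) / 2 = r := by ring
    calc _ ≤ 2 * 1 / ‖(2 - s + r) / 2 - (2 - s - r) / 2‖ :=
          norm_geomSum₂_le_of_ne (fun h => by linarith [sub_eq_zero.mpr h]) le_rfl
            (by rw [Real.norm_eq_abs, abs_le]; constructor <;> linarith)
            (by rw [Real.norm_eq_abs, abs_le]; constructor <;> linarith) n
      _ ≤ 4 / s := by
          rw [hsub, Real.norm_of_nonneg hr0, div_le_div_iff₀ (by linarith) hs0]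
          linarith
  · calc _ ≤ (s / 4)⁻¹ :=
          norm_geomSum₂_le_inv (by positivity)
            (by rw [Real.norm_eq_abs, abs_le]; constructor <;> linarith)
            (by rw [Real.norm_eq_abs, abs_le]; constructor <;> linarith) n
      _ = 4 / s := inv_div s 4

lemma norm_geomSum₂_complex_roots_le {s w : ℝ} (hs0 : 0 < s) (hs2 : s ≤ 2) (hw : 0 < w)
    (hsw : (2 - s) ^ 2 + w ^ 2 ≤ 4) (n : ℕ) :
    ‖geomSum₂ (⟨(2 - s) / 2, w / 2⟩ : ℂ) ⟨(2 - s) / 2, -(w / 2)⟩ n‖ ≤ 4 / s := by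
  have norm_sq_mk (a b : ℝ) : ‖(⟨a, b⟩ : ℂ)‖ ^ 2 = a ^ 2 + b ^ 2 := by
    rw [Complex.sq_norm, Complex.normSq_mk]; ring
  set x : ℂ := ⟨(2 - s) / 2, w / 2⟩
  set y : ℂ := ⟨(2 - s) / 2, -(w / 2)⟩
  set ρ := ‖x‖
  have hρ0 : 0 ≤ ρ := norm_nonneg x
  have hρ : ρ ^ 2 = ((2 - s) ^ 2 + w ^ 2) / 4 := by rw [norm_sq_mk]; ring
  have hy : ‖y‖ = ρ := by
    rw [← sq_eq_sq₀ (norm_nonneg y) hρ0, hρ, norm_sq_mk]; ring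
  by_cases hcontr : 3 * s ^ 2 + 4 * w ^ 2 ≤ 8 * s
  · have hx : ρ ≤ 1 - s / 4 := by nlinarith
    calc _ ≤ (s / 4)⁻¹ := norm_geomSum₂_le_inv (by positivity) hx (hy ▸ hx) n
      _ = 4 / s := inv_div s 4
  · have hsub : ‖x - y‖ = w := by
      rw [← sq_eq_sq₀ (norm_nonneg _) hw.le,
        show x - y = ⟨0, w⟩ by apply Complex.ext <;> simp [x, y], norm_sq_mk]
      ring
    have hxy : x ≠ y := fun h => by simp [sub_eq_zero.mpr h] at hsub; linarith
    have hsρ : s * ρ ≤ 2 * w := by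
      rw [← pow_le_pow_iff_left₀ (by positivity) (by positivity) two_ne_zero, mul_pow, hρ]
      nlinarith
    calc _ ≤ 2 * ρ / ‖x - y‖ :=
          norm_geomSum₂_le_of_ne hxy (by nlinarith) le_rfl hy.le n
      _ ≤ 4 / s := by
          rw [hsub, div_le_div_iff₀ hw hs0]
          linarith

end GeomSum

theorem abs_le_of_two_step_rec {s m : ℝ} (hs0 : 0 < s) (hs2 : s ≤ 2) (hm : 0 ≤ m) (hms : m ≤ s)
    {u : ℕ → ℝ} (h0 : u 0 = 0) (hrec : ∀ n, u (n + 2) = (2 - s) * u (n + 1) - (1 - m) * u n)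
    (n : ℕ) : |u n| ≤ 4 / s * |u 1| := by
  rw [mul_comm]
  rcases le_or_gt 0 (s ^ 2 - 4 * (s - m)) with hD | hD
  · set r := √(s ^ 2 - 4 * (s - m))
    have hr : r ^ 2 = s ^ 2 - 4 * (s - m) := Real.sq_sqrt hD
    have hrs : r ≤ s := Real.sqrt_le_iff.mpr ⟨hs0.le, by nlinarith⟩
    have hprod : (2 - s + r) / 2 * ((2 - s - r) / 2) = 1 - m := by
      linear_combination (-1 / 4) * hr
    have hu := eq_mul_geomSum₂_of_rec (x := (2 - s + r) / 2) (y := (2 - s - r) / 2) h0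
      (fun n => by rw [hrec n, ← hprod]; ring) n
    rw [hu, abs_mul]
    gcongr
    exact abs_geomSum₂_real_roots_le hs0 hs2 (Real.sqrt_nonneg _) hrs n
  · set w := √(-(s ^ 2 - 4 * (s - m)))
    have hw : w ^ 2 = -(s ^ 2 - 4 * (s - m)) := Real.sq_sqrt (by linarith)
    have hw0 : 0 < w := Real.sqrt_pos.mpr (by linarith)
    let x : ℂ := ⟨(2 - s) / 2, w / 2⟩
    let y : ℂ := ⟨(2 - s) / 2, -(w / 2)⟩
    have hsum : x + y = 2 - s := by apply Complex.ext <;> simp [x, y]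
    have hprod : x * y = 1 - m := by
      apply Complex.ext <;> simp [x, y] <;> linarith
    have hu := eq_mul_geomSum₂_of_rec (u := fun n => (u n : ℂ)) (x := x) (y := y) (by simp [h0])
      (fun n => by simp only [hrec n, hsum, hprod]; push_cast; ring) n
    have hnorm : |u n| = |u 1| * ‖geomSum₂ x y n‖ := by
      simpa only [norm_mul, Complex.norm_real, Real.norm_eq_abs] using congrArg norm hu
    rw [hnorm]
    gcongr
    exact norm_geomSum₂_complex_roots_le hs0 hs2 hw0 (by nlinarith) n

section ConjDiagonal

variable {ι : Type*} [Fintype ι] [DecidableEq ι]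

lemma dotProduct_mulVec_conj_diagonal (U : Matrix ι ι ℝ) (f v : ι → ℝ) :
    v ⬝ᵥ (U * diagonal f * star U) *ᵥ v = ∑ i, f i * (star U *ᵥ v) i ^ 2 := by
  rw [← mulVec_mulVec, ← mulVec_mulVec, dotProduct_mulVec, star_eq_conjTranspose,
    conjTranspose_eq_transpose_of_trivial, ← mulVec_transpose, dotProduct]
  simp only [mulVec_diagonal]
  exact sum_congr rfl fun i _ => by ring

variable {U : Matrix ι ι ℝ}

lemma star_mul_conj_diagonal (hU : U ∈ unitary (Matrix ι ι ℝ)) (f : ι → ℝ) :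
    star U * (U * diagonal f * star U) = diagonal f * star U := by
  rw [← Matrix.mul_assoc, ← Matrix.mul_assoc, Unitary.star_mul_self_of_mem hU, Matrix.one_mul]

lemma conj_diagonal_mul_conj_diagonal (hU : U ∈ unitary (Matrix ι ι ℝ)) (f g : ι → ℝ) :
    (U * diagonal f * star U) * (U * diagonal g * star U) = U * diagonal (f * g) * star U := by
  rw [Matrix.mul_assoc (U * diagonal f), star_mul_conj_diagonal hU, ← Matrix.mul_assoc,
    Matrix.mul_assoc U, diagonal_mul_diagonal]
  rfl

lemma inv_conj_diagonal (hU : U ∈ unitary (Matrix ι ι ℝ)) {f : ι → ℝ} (hf : ∀ i, f i ≠ 0) :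
    (U * diagonal f * star U)⁻¹ = U * diagonal f⁻¹ * star U := by
  apply inv_eq_right_inv
  rw [conj_diagonal_mul_conj_diagonal hU,
    show f * f⁻¹ = fun _ => 1 from funext fun i => mul_inv_cancel₀ (hf i), diagonal_one,
    Matrix.mul_one, Unitary.mul_star_self_of_mem hU]

lemma conj_diagonal_mulVec_dotProduct_self (hU : U ∈ unitary (Matrix ι ι ℝ)) (f v : ι → ℝ) :
    (U * diagonal f * star U) *ᵥ v ⬝ᵥ (U * diagonal f * star U) *ᵥ v
      = ∑ i, f i ^ 2 * (star U *ᵥ v) i ^ 2 := by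
  have hsymm : (U * diagonal f * star U)ᵀ = U * diagonal f * star U := by
    rw [← conjTranspose_eq_transpose_of_trivial, conjTranspose_mul, conjTranspose_mul,
      diagonal_conjTranspose, ← star_eq_conjTranspose, ← star_eq_conjTranspose, star_star,
      star_trivial, Matrix.mul_assoc]
  rw [dotProduct_comm, dotProduct_mulVec, ← mulVec_transpose, hsymm, mulVec_mulVec,
    dotProduct_comm, conj_diagonal_mul_conj_diagonal hU, dotProduct_mulVec_conj_diagonal]
  simp only [Pi.mul_apply, sq]

theorem dotProduct_mulVec_le_of_two_step_rec (hU : U ∈ unitary (Matrix ι ι ℝ))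
    {H : Matrix ι ι ℝ} {e : ι → ℝ} (hH : H = U * diagonal e * star U) (he : ∀ i, 0 < e i)
    {α β : ℝ} (hα : 0 ≤ α) (hβ : 0 ≤ β) (hαβ : 0 < α + β) (hαβe : ∀ i, (α + β) * e i ≤ 2)
    {η : ℕ → ι → ℝ} (h0 : η 0 = 0)
    (hrec : ∀ n, η (n + 2) = (η (n + 1) - α • H *ᵥ η (n + 1))
      + ((η (n + 1) - η n) - β • H *ᵥ (η (n + 1) - η n))) (n : ℕ) :
    η n ⬝ᵥ H *ᵥ η n ≤ 16 / (α + β) ^ 2 * (η 1 ⬝ᵥ H⁻¹ *ᵥ η 1) := by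
  have hcoord : ∀ v i, (star U *ᵥ (H *ᵥ v)) i = e i * (star U *ᵥ v) i := by
    intro v i
    rw [hH, mulVec_mulVec, star_mul_conj_diagonal hU, ← mulVec_mulVec, mulVec_diagonal]
  have hbound : ∀ i, |(star U *ᵥ η n) i| ≤ 4 / ((α + β) * e i) * |(star U *ᵥ η 1) i| := by
    intro i
    have hei := he i
    refine abs_le_of_two_step_rec (m := β * e i) (by positivity) (hαβe i) (by positivity)
      (by nlinarith) (u := fun k => (star U *ᵥ η k) i) (by simp [h0]) (fun k => ?_) n
    simp only [hrec k, mulVec_add, mulVec_sub, mulVec_smul, Pi.add_apply, Pi.sub_apply,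
      Pi.smul_apply, smul_eq_mul, hcoord]
    ring
  rw [hH, inv_conj_diagonal hU fun i => (he i).ne', dotProduct_mulVec_conj_diagonal,
    dotProduct_mulVec_conj_diagonal, mul_sum]
  refine sum_le_sum fun i _ => ?_
  have hei := he i
  calc e i * (star U *ᵥ η n) i ^ 2
      ≤ e i * (4 / ((α + β) * e i) * |(star U *ᵥ η 1) i|) ^ 2 := by
        rw [← sq_abs]
        gcongr
        exact hbound i
    _ = 16 / (α + β) ^ 2 * (e⁻¹ i * (star U *ᵥ η 1) i ^ 2) := by
        rw [Pi.inv_apply, mul_pow, sq_abs]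
        field_simp
        ring

end ConjDiagonal

namespace Matrix.IsHermitian

variable {ι : Type*} [Fintype ι] [DecidableEq ι] {H : Matrix ι ι ℝ} (hH : H.IsHermitian)

lemma eq_conj_diagonal_eigenvalues :
    H = (hH.eigenvectorUnitary : Matrix ι ι ℝ) * diagonal hH.eigenvalues *
      star (hH.eigenvectorUnitary : Matrix ι ι ℝ) := by
  conv_lhs => rw [hH.spectral_theorem]
  simp [RCLike.ofReal_real_eq_id]

lemma eigenvalues_le {L : ℝ} (hL : ∀ v, v ⬝ᵥ H *ᵥ v ≤ L * (v ⬝ᵥ v)) (i : ι) :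
    hH.eigenvalues i ≤ L := by
  have hnorm : inner ℝ (hH.eigenvectorBasis i) (hH.eigenvectorBasis i) = 1 := by
    rw [real_inner_self_eq_norm_sq, hH.eigenvectorBasis.orthonormal.1 i, one_pow]
  rw [EuclideanSpace.inner_eq_star_dotProduct, star_trivial] at hnorm
  simpa [hH.eigenvalues_eq i, hnorm] using hL (hH.eigenvectorBasis i)

end Matrix.IsHermitian

lemma Matrix.PosDef.sqrt_inv_mulVec_dotProduct_self {ι : Type*} [Fintype ι] [DecidableEq ι]
    {H : Matrix ι ι ℝ} (hH : H.PosDef) (v : ι → ℝ) :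
    (hH.posSemidef.sqrt)⁻¹ *ᵥ v ⬝ᵥ (hH.posSemidef.sqrt)⁻¹ *ᵥ v = v ⬝ᵥ H⁻¹ *ᵥ v := by
  have hU := hH.1.eigenvectorUnitary.2
  have hsqrt : ∀ i, ((√·) ∘ hH.1.eigenvalues) i ≠ 0 := fun i =>
    (Real.sqrt_pos.mpr (hH.eigenvalues_pos i)).ne'
  rw [PosSemidef.sqrt, inv_conj_diagonal hU hsqrt, conj_diagonal_mulVec_dotProduct_self hU]
  conv_rhs => rw [hH.1.eq_conj_diagonal_eigenvalues,
    inv_conj_diagonal hU fun i => (hH.eigenvalues_pos i).ne', dotProduct_mulVec_conj_diagonal]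
  refine sum_congr rfl fun i _ => ?_
  rw [Pi.inv_apply, Function.comp_apply, inv_pow, Real.sq_sqrt (hH.eigenvalues_pos i).le,
    Pi.inv_apply]

lemma quadratic_sub_quadratic_of_mulVec_eq {ι : Type*} [Fintype ι] {H : Matrix ι ι ℝ}
    (hH : H.IsSymm) {q θstar : ι → ℝ} (hq : H *ᵥ θstar = q) (θ : ι → ℝ) :
    (1 / 2 * (θ ⬝ᵥ H *ᵥ θ) - q ⬝ᵥ θ) - (1 / 2 * (θstar ⬝ᵥ H *ᵥ θstar) - q ⬝ᵥ θstar)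
      = 1 / 2 * ((θ - θstar) ⬝ᵥ H *ᵥ (θ - θstar)) := by
  have hsymm : θstar ⬝ᵥ H *ᵥ θ = θ ⬝ᵥ H *ᵥ θstar := by
    rw [dotProduct_mulVec, ← mulVec_transpose, hH.eq, dotProduct_comm]
  subst hq
  simp only [mulVec_sub, dotProduct_sub, sub_dotProduct, hsymm, dotProduct_comm (H *ᵥ θstar)]
  ring

theorem stmt_13_general (d : ℕ)
    (H : Matrix (Fin d) (Fin d) ℝ) (hHsymm : H.IsSymm) (hHpd : H.PosDef)
    (L : ℝ) (hL0 : 0 < L)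
    (hL : ∀ v : Fin d → ℝ, v ⬝ᵥ H.mulVec v ≤ L * (v ⬝ᵥ v))
    (q θstar : Fin d → ℝ) (hθstar : H.mulVec θstar = q)
    (α β : ℝ) (hα0 : 0 ≤ α) (hβ0 : 0 ≤ β) (hβ : β ≤ 2 / L - α)
    (hαβ : 0 < α + β)
    (θ : ℕ → Fin d → ℝ) (hθ1 : θ 1 = θ 0)
    (η : ℕ → Fin d → ℝ) (hη : ∀ n, η n = (n : ℝ) • (θ n - θstar))
    (hrec : ∀ n : ℕ, 1 ≤ n →
      η (n + 1) = (η n - α • H.mulVec (η n))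
        + ((η n - η (n - 1)) - β • H.mulVec (η n - η (n - 1)))) :
    ∀ n : ℕ, 1 ≤ n →
      ((1 : ℝ) / 2 * (θ n ⬝ᵥ H.mulVec (θ n)) - q ⬝ᵥ θ n)
          - ((1 : ℝ) / 2 * (θstar ⬝ᵥ H.mulVec θstar) - q ⬝ᵥ θstar)
        ≤ 8 * (((hHpd.posSemidef.sqrt)⁻¹.mulVec (θ 0 - θstar)) ⬝ᵥ
              ((hHpd.posSemidef.sqrt)⁻¹.mulVec (θ 0 - θstar)))
            / ((α + β) ^ 2 * (n : ℝ) ^ 2) := by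
  intro n hn
  have hαβL : (α + β) * L ≤ 2 := by
    rw [le_sub_iff_add_le, le_div_iff₀ hL0] at hβ
    linarith
  have hbound := dotProduct_mulVec_le_of_two_step_rec (η := η) hHpd.1.eigenvectorUnitary.2
    hHpd.1.eq_conj_diagonal_eigenvalues hHpd.eigenvalues_pos hα0 hβ0 hαβ
    (fun i => (mul_le_mul_of_nonneg_left (hHpd.1.eigenvalues_le hL i) hαβ.le).trans hαβL)
    (by simp [hη]) (fun k => by simpa only [Nat.add_sub_cancel] using hrec (k + 1) (by omega)) n
  have hη1 : η 1 = θ 0 - θstar := by simp [hη, hθ1]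
  have hηn : η n ⬝ᵥ H *ᵥ η n = (n : ℝ) ^ 2 * ((θ n - θstar) ⬝ᵥ H *ᵥ (θ n - θstar)) := by
    simp only [hη, mulVec_smul, dotProduct_smul, smul_dotProduct, smul_eq_mul]
    ring
  have hn0 : (0 : ℝ) < n := by exact_mod_cast hn
  calc _ = η n ⬝ᵥ H *ᵥ η n / (2 * n ^ 2) := by
        rw [quadratic_sub_quadratic_of_mulVec_eq hHsymm hθstar, hηn]
        field_simp
    _ ≤ 16 / (α + β) ^ 2 * (η 1 ⬝ᵥ H⁻¹ *ᵥ η 1) / (2 * n ^ 2) := by gcongr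
    _ = _ := by
        rw [hη1, hHpd.sqrt_inv_mulVec_dotProduct_self]
        field_simp
        ring

/-- Third bound of Theorem 2 in terms of function values: for 0 ≤ α ≤ 1/L,
0 ≤ β ≤ 2/L - α and α + β > 0, f(θ_n) - f(θ*) ≤ 8‖H^{-1/2}(θ_0 - θ*)‖²/((α+β)²n²). -/
theorem stmt_13 (d : ℕ) (hd : 1 ≤ d)
    (H : Matrix (Fin d) (Fin d) ℝ) (hHsymm : H.IsSymm) (hHpd : H.PosDef)
    (L : ℝ) (hL0 : 0 < L)
    (hL : ∀ v : Fin d → ℝ, v ⬝ᵥ H.mulVec v ≤ L * (v ⬝ᵥ v))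
    (q θstar : Fin d → ℝ) (hθstar : H.mulVec θstar = q)
    (α β : ℝ) (hα0 : 0 ≤ α) (hα : α ≤ 1 / L) (hβ0 : 0 ≤ β) (hβ : β ≤ 2 / L - α)
    (hαβ : 0 < α + β)
    (θ : ℕ → Fin d → ℝ) (hθ1 : θ 1 = θ 0)
    (η : ℕ → Fin d → ℝ) (hη : ∀ n, η n = (n : ℝ) • (θ n - θstar))
    (hrec : ∀ n : ℕ, 1 ≤ n →
      η (n + 1) = (η n - α • H.mulVec (η n))
        + ((η n - η (n - 1)) - β • H.mulVec (η n - η (n - 1)))) :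
    ∀ n : ℕ, 1 ≤ n →
      ((1 : ℝ) / 2 * (θ n ⬝ᵥ H.mulVec (θ n)) - q ⬝ᵥ θ n)
          - ((1 : ℝ) / 2 * (θstar ⬝ᵥ H.mulVec θstar) - q ⬝ᵥ θstar)
        ≤ 8 * (((hHpd.posSemidef.sqrt)⁻¹.mulVec (θ 0 - θstar)) ⬝ᵥ
              ((hHpd.posSemidef.sqrt)⁻¹.mulVec (θ 0 - θstar)))
            / ((α + β) ^ 2 * (n : ℝ) ^ 2) :=
  stmt_13_general d H hHsymm hHpd L hL0 hL q θstar hθstar α β hα0 hβ0 hβ hαβ θ hθ1 η hη hrec
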